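/- Let S be a finite type, (S, step, s₀) a transition system, and F ⊆ S. If there is a finite run ρ : Fin (m+1) → S from s₀ such that the cardinality of the set {i : Fin (m+1) | ρ i ∈ F} is at least Fintype.card S + 1, then there exists an infinite run π from s₀ such that the set {n : ℕ | π n ∈ F} is infinite. -/

import Mathlib

/-- A finite run of length `m` of a transition system from the initial state `s₀`. -/
def TSFinRun {S : Type*} (step : S → S → Prop) (s₀ : S) (m : ℕ)
    (ρ : Fin (m + 1) → S) : Prop :=
  ρ 0 = s₀ ∧ ∀ i : Fin m, step (ρ i.castSucc) (ρ i.succ)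

/-- An infinite run of a transition system from the initial state `s₀`. -/
def TSInfRun {S : Type*} (step : S → S → Prop) (s₀ : S) (π : ℕ → S) : Prop :=
  π 0 = s₀ ∧ ∀ n : ℕ, step (π n) (π (n + 1))

/-! Pigeonhole: among more than `|S|` visits of the run to `F`, two positions `i < j` carry the
same state. The lasso that follows the run up to `j` and then loops forever through the segment
from `i` to `j` is an infinite run that passes through the state `ρ i ∈ F` once per lap. -/

def lassoIndex (a p n : ℕ) : ℕ :=
  if n < a then n else a + (n - a) % p

theorem lassoIndex_zero (a p : ℕ) : lassoIndex a p 0 = 0 := by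
  simp [lassoIndex]

theorem lassoIndex_lt {p : ℕ} (hp : 0 < p) (a n : ℕ) : lassoIndex a p n < a + p := by
  unfold lassoIndex
  split_ifs
  · omega
  · exact Nat.add_lt_add_left (Nat.mod_lt _ hp) a

theorem lassoIndex_succ {p : ℕ} (hp : 0 < p) (a n : ℕ) :
    lassoIndex a p (n + 1) =
      if lassoIndex a p n + 1 = a + p then a else lassoIndex a p n + 1 := by
  unfold lassoIndex
  rcases lt_or_ge n a with hn | hn
  · by_cases hna : n + 1 < a
    · simp only [hn, hna, if_true]; split_ifs <;> omega
    · obtain rfl : a = n + 1 := by omega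
      simp
  · have hsucc : n + 1 - a = n - a + 1 := by omega
    simp only [show ¬ n < a by omega, show ¬ n + 1 < a by omega, if_false, hsucc]
    rcases Nat.lt_or_ge 1 p with h1 | h1
    · have hr := Nat.mod_lt (n - a) hp
      rw [Nat.add_mod_eq_ite, Nat.mod_eq_of_lt h1]; split_ifs <;> omega
    · obtain rfl : p = 1 := by omega
      simp [Nat.mod_one]

theorem infinite_setOf_lassoIndex_eq {p : ℕ} (hp : 0 < p) (a : ℕ) :
    {n | lassoIndex a p n = a}.Infinite :=
  Set.infinite_of_injective_forall_mem
    ((add_right_injective a).comp (mul_left_injective₀ hp.ne')) fun k => by simp [lassoIndex]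

theorem tsInfRun_comp_lassoIndex {S : Type*} {step : S → S → Prop} {s₀ : S} {f : ℕ → S}
    {a p : ℕ} (hp : 0 < p) (h0 : f 0 = s₀) (hstep : ∀ n < a + p, step (f n) (f (n + 1)))
    (hloop : f (a + p) = f a) : TSInfRun step s₀ (f ∘ lassoIndex a p) := by
  refine ⟨by simp [lassoIndex_zero, h0], fun n => ?_⟩
  have hlt := lassoIndex_lt hp a n
  simp only [Function.comp, lassoIndex_succ hp]
  split_ifs with hwrap
  · rw [← hloop, ← hwrap]; exact hstep _ hlt
  · exact hstep _ hlt

theorem TSFinRun.exists_infRun_of_revisit {S : Type*} {step : S → S → Prop} {s₀ : S}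
    {F : Set S} {m : ℕ} {ρ : Fin (m + 1) → S} (hρ : TSFinRun step s₀ m ρ)
    {i j : Fin (m + 1)} (hij : i < j) (hloop : ρ i = ρ j) (hF : ρ i ∈ F) :
    ∃ π : ℕ → S, TSInfRun step s₀ π ∧ {n : ℕ | π n ∈ F}.Infinite := by
  set f : ℕ → S := fun n => ρ (Fin.clamp n m)
  have hf : ∀ k : Fin (m + 1), f k = ρ k := fun k =>
    congrArg ρ (Fin.ext (min_eq_left (Nat.le_of_lt_succ k.isLt)))
  have hp : 0 < (j : ℕ) - i := Nat.sub_pos_of_lt hij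
  have hj : (i : ℕ) + (j - i) = j := Nat.add_sub_of_le hij.le
  have hstep : ∀ n < (i : ℕ) + (j - i), step (f n) (f (n + 1)) := fun n hn => by
    convert hρ.2 ⟨n, by omega⟩ using 2 <;> ext <;> simp [Fin.coe_clamp] <;> omega
  refine ⟨f ∘ lassoIndex i (j - i), tsInfRun_comp_lassoIndex hp ?_ hstep ?_,
    (infinite_setOf_lassoIndex_eq hp i).mono fun n hn => ?_⟩
  · simpa [hρ.1] using hf 0
  · rw [hj, hf, hf, hloop]
  · change f (lassoIndex i (j - i) n) ∈ F
    rwa [show lassoIndex i (j - i) n = i from hn, hf]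

/-- Pigeonhole plus lasso: if a finite run of a finite-state transition system visits
the set `F` at least `Fintype.card S + 1` times, then there is an infinite run from
the initial state visiting `F` infinitely often. -/
theorem exists_infRun_infinite_visits_of_many_visits {S : Type*} [Fintype S]
    (step : S → S → Prop) (s₀ : S) (F : Set S) {m : ℕ} (ρ : Fin (m + 1) → S)
    (hρ : TSFinRun step s₀ m ρ)
    (hcard : Fintype.card S + 1 ≤ {i : Fin (m + 1) | ρ i ∈ F}.ncard) :
    ∃ π : ℕ → S, TSInfRun step s₀ π ∧ {n : ℕ | π n ∈ F}.Infinite := by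
  have hlt : (Set.univ : Set S).ncard < {i | ρ i ∈ F}.ncard := by
    rwa [Set.ncard_univ, Nat.card_eq_fintype_card, ← Nat.succ_le_iff]
  obtain ⟨i, hi, j, hj, hne, hij⟩ :=
    Set.exists_ne_map_eq_of_ncard_lt_of_maps_to hlt fun i _ => Set.mem_univ (ρ i)
  rcases hne.lt_or_gt with h | h
  · exact hρ.exists_infRun_of_revisit h hij hi
  · exact hρ.exists_infRun_of_revisit h hij.symm hj
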